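/- Let n ≥ 2 and let X be a minimal subshift whose topological rank equals n (in particular, X has finite topological rank). Then X has finite symbolic rank; that is, there exist m ≥ 1 and an infinite word V with a rank-m construction such that X = X_V. -/

import Mathlib

namespace SubshiftRank

/-! ### Words over the alphabet {0,1}; `false` plays the role of `0`, `true` of `1`. -/

abbrev Word := List Bool

/-- `ℱ`: the set of finite nonempty words over `{0,1}` beginning and ending with `0`. -/
def FF : Set Word := {w | w ≠ [] ∧ w.head? = some false ∧ w.getLast? = some false}

/-- `spacer s = 1^s`. -/
def spacer (s : ℕ) : Word := List.replicate s true

/-- A building: a sequence of words `v₁, …, v_k` with spacers `s₁, …, s_k` (the `pairs`),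
followed by a final word `v_{k+1}` (the `last`).  The assembled word is
`v₁1^{s₁}v₂1^{s₂}⋯v_k1^{s_k}v_{k+1}`. -/
structure Building where
  pairs : List (Word × ℕ)
  last : Word

/-- The word assembled by a building. -/
def Building.word (b : Building) : Word :=
  b.pairs.foldr (fun p acc => p.1 ++ spacer p.2 ++ acc) b.last

/-- The words `v₁, …, v_{k+1}` used in a building (in order). -/
def Building.pieces (b : Building) : List Word := b.pairs.map Prod.fst ++ [b.last]

/-- `b` is a building from the set `S`: there is at least one spacer (i.e. `k ≥ 1`, at least
two pieces) and all the pieces belong to `S`. -/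
def Building.FromSet (b : Building) (S : Set Word) : Prop :=
  b.pairs ≠ [] ∧ ∀ v ∈ b.pieces, v ∈ S

/-- The first word of a building. -/
def Building.firstPiece (b : Building) : Word := b.pieces.headI

/-- Every word of `S` is used in the building. -/
def Building.UsesAll (b : Building) (S : Set Word) : Prop := ∀ v ∈ S, v ∈ b.pieces

/-- The spacer parameter of the building is bounded by `M`. -/
def Building.SpacersLE (b : Building) (M : ℕ) : Prop := ∀ p ∈ b.pairs, p.2 ≤ M

/-- `w` is built from `S`. -/
def BuiltFrom (w : Word) (S : Set Word) : Prop := ∃ b : Building, b.FromSet S ∧ b.word = w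

/-- The `i`-th level `S_i = {v_{i,1}, …, v_{i,n_i}}` of a generating sequence. -/
def levelSet (ni : ℕ → ℕ) (wd : ℕ → ℕ → Word) (i : ℕ) : Set Word :=
  {w | ∃ j, 1 ≤ j ∧ j ≤ ni i ∧ wd i j = w}

/-- A (symbolic) rank-`n` construction: a rank-`n` generating sequence `v_{i,j}`
(`i ≥ 0`, `1 ≤ j ≤ n_i ≤ n`) together with, for each `i` and `1 ≤ j ≤ n_{i+1}`, one chosen
building of `v_{i+1,j}` from `S_i`, the building of `v_{i+1,1}` starting with `v_{i,1}`. -/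
structure RankConstruction (n : ℕ) where
  ni : ℕ → ℕ
  wd : ℕ → ℕ → Word
  bld : ℕ → ℕ → Building
  ni_pos : ∀ i, 1 ≤ ni i
  ni_le : ∀ i, ni i ≤ n
  mem_FF : ∀ i j, 1 ≤ j → j ≤ ni i → wd i j ∈ FF
  wd_zero : ∀ j, 1 ≤ j → j ≤ ni 0 → wd 0 j = [false]
  bld_from : ∀ i j, 1 ≤ j → j ≤ ni (i + 1) → (bld i j).FromSet (levelSet ni wd i)
  bld_word : ∀ i j, 1 ≤ j → j ≤ ni (i + 1) → (bld i j).word = wd (i + 1) j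
  bld_start : ∀ i, (bld i 1).firstPiece = wd i 1

/-- A rank-`n` construction is proper if `n_i = n` for all `i` and every word of `S_i` is used
in each chosen building. -/
def RankConstruction.Proper {n : ℕ} (c : RankConstruction n) : Prop :=
  (∀ i, c.ni i = n) ∧
    ∀ i j, 1 ≤ j → j ≤ c.ni (i + 1) → (c.bld i j).UsesAll (levelSet c.ni c.wd i)

/-- All spacer parameters of all chosen buildings are bounded by `M`. -/
def RankConstruction.SpacersBoundedBy {n : ℕ} (c : RankConstruction n) (M : ℕ) : Prop :=
  ∀ i j, 1 ≤ j → j ≤ c.ni (i + 1) → (c.bld i j).SpacersLE M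

/-- The spacer parameter of the construction is bounded. -/
def RankConstruction.BoundedSpacer {n : ℕ} (c : RankConstruction n) : Prop :=
  ∃ M, c.SpacersBoundedBy M

/-- `w` is of the form `α1^{s₁}v_{j₁}1^{s₂}v_{j₂}⋯v_{j_{k−1}}1^{s_k}β` where `k ≥ 1`, the
middle words belong to `S`, `α` is a nonempty suffix of a word of `S` and `β` is a nonempty
prefix of a word of `S`. -/
def BadDecomp (w : Word) (S : Set Word) : Prop :=
  ∃ (α β : Word) (mids : List (ℕ × Word)) (sk : ℕ),
    α ≠ [] ∧ β ≠ [] ∧ (∃ a ∈ S, α <:+ a) ∧ (∃ b ∈ S, β <+: b) ∧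
    (∀ p ∈ mids, p.2 ∈ S) ∧
    w = α ++ mids.foldr (fun p acc => spacer p.1 ++ p.2 ++ acc) (spacer sk ++ β)

/-- A rank-`n` construction is good if it is proper and no `v_{i,j}` has a bad decomposition
over `S_i`. -/
def RankConstruction.Good {n : ℕ} (c : RankConstruction n) : Prop :=
  c.Proper ∧ ∀ i j, 1 ≤ j → j ≤ c.ni i → ¬ BadDecomp (c.wd i j) (levelSet c.ni c.wd i)

/-- The finite word `w` is a prefix (initial segment) of the infinite word `V`. -/
def InfExtends (V : ℕ → Bool) (w : Word) : Prop := ∀ k, k < w.length → w.getD k false = V k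

/-- `V = lim_i v_{i,1}` is the infinite word determined by the construction. -/
def RankConstruction.HasLimit {n : ℕ} (c : RankConstruction n) (V : ℕ → Bool) : Prop :=
  (∀ i, InfExtends V (c.wd i 1)) ∧ ∀ m : ℕ, ∃ i, m ≤ (c.wd i 1).length

/-- The infinite word `V` has a rank-`n` construction. -/
def HasRankConstr (V : ℕ → Bool) (n : ℕ) : Prop := ∃ c : RankConstruction n, c.HasLimit V

/-! ### Occurrences and subshifts -/

/-- The finite word `u` occurs in the infinite word `V` at position `p`. -/
def OccursAtInf (u : Word) (V : ℕ → Bool) (p : ℕ) : Prop :=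
  ∀ k, k < u.length → u.getD k false = V (p + k)

/-- `u` is a subword of the infinite word `V`. -/
def OccursInInf (u : Word) (V : ℕ → Bool) : Prop := ∃ p, OccursAtInf u V p

/-- The finite word `u` occurs in the bi-infinite word `x` at position `p`. -/
def OccursAtBi (u : Word) (x : ℤ → Bool) (p : ℤ) : Prop :=
  ∀ k : ℕ, k < u.length → u.getD k false = x (p + (k : ℤ))

/-- `u` is a subword of the bi-infinite word `x`. -/
def OccursInBi (u : Word) (x : ℤ → Bool) : Prop := ∃ p, OccursAtBi u x p

/-- The Bernoulli shift `σ` on `{0,1}^ℤ`. -/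
def shift (x : ℤ → Bool) : ℤ → Bool := fun k => x (k + 1)

/-- The subshift generated by the infinite word `V`. -/
def XV (V : ℕ → Bool) : Set (ℤ → Bool) := {x | ∀ u : Word, OccursInBi u x → OccursInInf u V}

/-- The `σ`-orbit of `x`. -/
def sorbit (x : ℤ → Bool) : Set (ℤ → Bool) := Set.range fun n : ℤ => fun k => x (k + n)

/-- A subshift: a nonempty closed shift-invariant subset of `{0,1}^ℤ`. -/
def IsSubshift (X : Set (ℤ → Bool)) : Prop := X.Nonempty ∧ IsClosed X ∧ shift '' X = X

/-- A minimal subshift: every orbit is dense. -/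
def MinimalSubshift (X : Set (ℤ → Bool)) : Prop :=
  IsSubshift X ∧ ∀ x ∈ X, X ⊆ closure (sorbit x)

/-- `X` has symbolic rank at most `n`. -/
def SymbRankLE (X : Set (ℤ → Bool)) (n : ℕ) : Prop := ∃ V, HasRankConstr V n ∧ X = XV V

/-- `X` has symbolic rank exactly `n`. -/
def SymbRankEq (X : Set (ℤ → Bool)) (n : ℕ) : Prop :=
  SymbRankLE X n ∧ ∀ m, SymbRankLE X m → n ≤ m

/-- `M` is a minimal subset of the system `(X, shift)`: a nonempty closed shift-invariant
subset of `X` with no proper nonempty closed shift-invariant subset. -/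
def IsMinimalSubsetOf (X M : Set (ℤ → Bool)) : Prop :=
  M.Nonempty ∧ IsClosed M ∧ M ⊆ X ∧ shift '' M = M ∧
    ∀ M', M' ⊆ M → M'.Nonempty → IsClosed M' → shift '' M' = M' → M' = M

/-- A bi-infinite word `x` is built from `v`: there is a strictly increasing bi-infinite
sequence of positions, with consecutive gaps at least `|v|` and unbounded in both directions,
at each of which `v` occurs, and `x` equals `1` outside those occurrences. -/
def BiBuiltFrom (x : ℤ → Bool) (v : Word) : Prop :=
  ∃ pos : ℤ → ℤ, StrictMono pos ∧
    (∀ i : ℤ, pos i + (v.length : ℤ) ≤ pos (i + 1)) ∧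
    (∀ n : ℤ, ∃ i : ℤ, n < pos i) ∧ (∀ n : ℤ, ∃ i : ℤ, pos i < n) ∧
    (∀ i : ℤ, OccursAtBi v x (pos i)) ∧
    (∀ p : ℤ, (∀ i : ℤ, ¬ (pos i ≤ p ∧ p < pos i + (v.length : ℤ))) → x p = true)

/-! ### General topological dynamics on (Cantor) metric spaces -/

/-- Every orbit of `T` is dense. -/
def MinimalHomeo {X : Type*} [TopologicalSpace X] (T : X ≃ₜ X) : Prop :=
  ∀ x : X, Dense (Set.range fun n : ℤ => (T.toEquiv ^ n) x)

/-- The system `(X, T)` is equicontinuous. -/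
def EquicontinuousSys {X : Type*} [MetricSpace X] (T : X ≃ₜ X) : Prop :=
  ∀ ε : ℝ, 0 < ε → ∃ δ : ℝ, 0 < δ ∧
    ∀ (n : ℤ) (x y : X), dist x y < δ → dist ((T.toEquiv ^ n) x) ((T.toEquiv ^ n) y) < ε

/-- `M` is a minimal set of `(X, T)`. -/
def IsMinimalSet {X : Type*} [TopologicalSpace X] (T : X → X) (M : Set X) : Prop :=
  M.Nonempty ∧ IsClosed M ∧ T '' M = M ∧
    ∀ M', M' ⊆ M → M'.Nonempty → IsClosed M' → T '' M' = M' → M' = M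

/-- `(X, T)` is essentially minimal: it has a unique minimal set. -/
def EssentiallyMinimal {X : Type*} [TopologicalSpace X] (T : X → X) : Prop :=
  ∃! M, IsMinimalSet T M

/-- `A` has the finite covering property: `⋃_{−N ≤ n ≤ N} T^n A = X` for some `N`. -/
def FiniteCovering {X : Type*} [TopologicalSpace X] (T : X ≃ₜ X) (A : Set X) : Prop :=
  ∃ N : ℕ, (⋃ n ∈ Finset.Icc (-(N : ℤ)) (N : ℤ), ⇑(T.toEquiv ^ n) '' A) = Set.univ

/-- A finite partition of the whole space into clopen sets. -/
def IsClopenPartition {X : Type*} [TopologicalSpace X] (Q : Finset (Set X)) : Prop :=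
  (∀ q ∈ Q, IsClopen q) ∧ (⋃ q ∈ Q, q) = Set.univ ∧
    ∀ q ∈ Q, ∀ q' ∈ Q, q ≠ q' → Disjoint q q'

/-- A Kakutani–Rohlin partition of `(X, T)`: clopen bases `B 0, …, B (d−1)` with heights
`h 0, …, h (d−1)` such that the sets `T^j (B k)` (`j < h k`) form a partition of `X` and
`⋃_k T^{h k} (B k) = ⋃_k B k`. -/
structure KRPart {X : Type*} [TopologicalSpace X] (T : X → X) where
  d : ℕ
  B : Fin d → Set X
  h : Fin d → ℕ
  d_pos : 0 < d
  h_pos : ∀ k, 0 < h k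
  clopen : ∀ k, IsClopen (B k)
  disj : ∀ (k k' : Fin d) (j j' : ℕ), j < h k → j' < h k' → (k, j) ≠ (k', j') →
    Disjoint (T^[j] '' B k) (T^[j'] '' B k')
  cover : (⋃ k, ⋃ j ∈ Finset.range (h k), T^[j] '' B k) = Set.univ
  base_eq : (⋃ k, T^[h k] '' B k) = ⋃ k, B k

/-- The base of a Kakutani–Rohlin partition. -/
def KRPart.base {X : Type*} [TopologicalSpace X] {T : X → X} (P : KRPart T) : Set X :=
  ⋃ k, P.B k

/-- `(X, T)` has topological rank at most `m` (Kakutani–Rohlin characterization). -/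
def TopRankLEGen {X : Type*} [MetricSpace X] (T : X → X) (m : ℕ) : Prop :=
  ∃ x : X, ∀ ε : ℝ, 0 < ε → ∃ P : KRPart T, P.d ≤ m ∧
    (∀ (k : Fin P.d) (j : ℕ), j < P.h k → Metric.diam (T^[j] '' P.B k) < ε) ∧
    Metric.diam P.base < ε ∧ x ∈ P.base

/-! ### Kakutani–Rohlin partitions and topological rank for subshifts -/

/-- A Kakutani–Rohlin partition of the subshift `(X, σ)`. -/
structure KRPartOn (X : Set (ℤ → Bool)) where
  d : ℕ
  B : Fin d → Set (ℤ → Bool)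
  h : Fin d → ℕ
  d_pos : 0 < d
  h_pos : ∀ k, 0 < h k
  subset : ∀ k, B k ⊆ X
  clopen : ∀ k, IsClopen {y : X | (y : ℤ → Bool) ∈ B k}
  disj : ∀ (k k' : Fin d) (j j' : ℕ), j < h k → j' < h k' → (k, j) ≠ (k', j') →
    Disjoint (shift^[j] '' B k) (shift^[j'] '' B k')
  cover : (⋃ k, ⋃ j ∈ Finset.range (h k), shift^[j] '' B k) = X
  base_eq : (⋃ k, shift^[h k] '' B k) = ⋃ k, B k

/-- The base of a Kakutani–Rohlin partition of a subshift. -/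
def KRPartOn.base {X : Set (ℤ → Bool)} (P : KRPartOn X) : Set (ℤ → Bool) := ⋃ k, P.B k

/-- All elements of `A` agree on the window `[−N, N]`; for the canonical metric on `2^ℤ`
this says exactly that `diam(A) ≤ 2^{−N}`. -/
def AgreeOn (N : ℕ) (A : Set (ℤ → Bool)) : Prop :=
  ∀ y ∈ A, ∀ z ∈ A, ∀ k : ℤ, |k| ≤ (N : ℤ) → y k = z k

/-- The subshift `(X, σ)` has topological rank at most `m` (Kakutani–Rohlin
characterization, with smallness of diameters expressed by agreement on windows,
matching the canonical compatible metric on `2^ℤ`). -/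
def TopRankLE (X : Set (ℤ → Bool)) (m : ℕ) : Prop :=
  ∃ x ∈ X, ∀ N : ℕ, ∃ P : KRPartOn X, P.d ≤ m ∧
    (∀ (k : Fin P.d) (j : ℕ), j < P.h k → AgreeOn N (shift^[j] '' P.B k)) ∧
    AgreeOn N P.base ∧ x ∈ P.base

/-! ### Factor maps and conjugacy -/

/-- `φ` is a (topological) factor map from the subshift `Y` onto the subshift `X`. -/
def IsFactorMapOn (Y X : Set (ℤ → Bool)) (φ : (ℤ → Bool) → (ℤ → Bool)) : Prop :=
  ContinuousOn φ Y ∧ φ '' Y = X ∧ ∀ y ∈ Y, φ (shift y) = shift (φ y)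

/-- `X` is a topological factor of `Y`. -/
def SubshiftFactor (Y X : Set (ℤ → Bool)) : Prop := ∃ φ, IsFactorMapOn Y X φ

/-- The subshifts `Y` and `X` are conjugate. -/
def SubshiftConjugate (Y X : Set (ℤ → Bool)) : Prop :=
  ∃ φ, IsFactorMapOn Y X φ ∧ Set.InjOn φ Y

/-- `(X, T)` is conjugate to the subshift `(Y, σ)`. -/
def ConjugateToSubshift {X : Type*} [TopologicalSpace X] (T : X ≃ₜ X) (Y : Set (ℤ → Bool)) :
    Prop :=
  ∃ φ : X → (ℤ → Bool), Continuous φ ∧ Function.Injective φ ∧ Set.range φ = Y ∧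
    ∀ x, φ (T x) = shift (φ x)

/-- The Boolean algebra of sets generated by `G`. -/
inductive GenBoolAlg {X : Type*} (G : Set (Set X)) : Set X → Prop
  | basic (A : Set X) : A ∈ G → GenBoolAlg G A
  | empty : GenBoolAlg G ∅
  | compl (A : Set X) : GenBoolAlg G A → GenBoolAlg G Aᶜ
  | union (A B : Set X) : GenBoolAlg G A → GenBoolAlg G B → GenBoolAlg G (A ∪ B)

/-- `(T, A)` is generating: the smallest Boolean algebra containing all `T^n A` contains
every clopen set. -/
def Generating {X : Type*} [TopologicalSpace X] (T : X ≃ₜ X) (A : Set X) : Prop :=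
  ∀ U : Set X, IsClopen U → GenBoolAlg {B : Set X | ∃ n : ℤ, B = ⇑(T.toEquiv ^ n) '' A} U

/-- The return-times word `Ret_A(x₀) ∈ 2^ℤ` of `x₀` to `A`. -/
noncomputable def retWord {X : Type*} [TopologicalSpace X] (T : X ≃ₜ X) (A : Set X) (x₀ : X) : ℤ → Bool :=
  fun n => @ite _ ((T.toEquiv ^ n) x₀ ∈ A) (Classical.propDecidable _) true false

/-! The point `x` lying in the bases of the Kakutani–Rohlin partitions that witness rank `n`
is not periodic, since a periodic orbit has rank one. Hence, by refining the window, the return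
times of `x` to the bases become arbitrarily sparse, and choosing each window inside the
previous base makes them nested: `R₀ ⊇ R₁ ⊇ ⋯`, with every gap of `R_{i+1}` longer than every
tower of level `i`. Fix consecutive zeros `a - s - 1 < a` of `x`; every return time sees them at
the same offsets. So the block `x[t + a, t' + a - s - 1]` between consecutive return times
`t < t'` begins and ends with `0`, depends only on the tower of `t`, and consecutive blocks are
separated by exactly `1^s`. Each block of level `i + 1` is then built from blocks of level `i`,
there are at most `n + 1` of them per level (one per tower, and the block at `0` listed first),
and the blocks at `0` converge to `V = x[a, ∞)`. Minimality of `X` and the recurrence of `x`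
give `X = X_V`. -/

open Function

def shiftBy (t : ℤ) (y : ℤ → Bool) : ℤ → Bool := fun k => y (k + t)

@[simp] lemma shiftBy_apply (t k : ℤ) (y : ℤ → Bool) : shiftBy t y k = y (k + t) := rfl

lemma shift_iterate (j : ℕ) (y : ℤ → Bool) : shift^[j] y = shiftBy j y := by
  induction j with
  | zero => funext k; simp
  | succ j ih =>
    funext k
    rw [iterate_succ_apply', ih]
    simp only [shift, shiftBy_apply]
    push_cast
    ring_nf

lemma IsSubshift.shiftBy_mem {X : Set (ℤ → Bool)} (hX : IsSubshift X) (t : ℤ) {y : ℤ → Bool}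
    (hy : y ∈ X) : shiftBy t y ∈ X := by
  have hsucc : ∀ y ∈ X, shiftBy 1 y ∈ X := fun y hy => by
    rw [← hX.2.2]
    exact Set.mem_image_of_mem shift hy
  have hpred : ∀ y ∈ X, shiftBy (-1) y ∈ X := fun y hy => by
    rw [← hX.2.2] at hy
    obtain ⟨z, hz, rfl⟩ := hy
    convert hz using 1
    funext k
    simp [shift]
  induction t using Int.induction_on generalizing y with
  | zero => convert hy using 1; funext k; simp
  | succ i ih =>
    convert hsucc _ (ih hy) using 1
    funext k
    simp only [shiftBy_apply]
    ring_nf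
  | pred i ih =>
    convert hpred _ (ih hy) using 1
    funext k
    simp only [shiftBy_apply]
    ring_nf

def segment (y : ℤ → Bool) (a : ℤ) (len : ℕ) : Word :=
  (List.range len).map fun r : ℕ => y (a + r)

@[simp] lemma segment_length (y : ℤ → Bool) (a : ℤ) (len : ℕ) :
    (segment y a len).length = len := by
  simp [segment]

lemma segment_getD (y : ℤ → Bool) (a : ℤ) {k len : ℕ} (h : k < len) :
    (segment y a len).getD k false = y (a + k) := by
  simp [segment, List.getD_eq_getElem?_getD, List.getElem?_range h]

lemma segment_append (y : ℤ → Bool) (a : ℤ) (m k : ℕ) :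
    segment y a m ++ segment y (a + m) k = segment y a (m + k) := by
  simp only [segment, List.range_add, List.map_append, List.map_map]
  congr 1
  refine List.map_congr_left fun r _ => ?_
  simp only [comp_apply]
  push_cast
  ring_nf

lemma segment_congr {y z : ℤ → Bool} {a b : ℤ} {len : ℕ}
    (h : ∀ r : ℕ, r < len → y (a + r) = z (b + r)) : segment y a len = segment z b len :=
  List.map_congr_left fun r hr => h r (List.mem_range.1 hr)

lemma segment_eq_spacer {y : ℤ → Bool} {a : ℤ} {len : ℕ}
    (h : ∀ r : ℕ, r < len → y (a + r) = true) : segment y a len = spacer len := by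
  rw [spacer, List.eq_replicate_iff]
  refine ⟨segment_length y a len, ?_⟩
  simp only [segment, List.mem_map, List.mem_range]
  rintro _ ⟨r, hr, rfl⟩
  exact h r hr

lemma segment_mem_FF {y : ℤ → Bool} {a : ℤ} {m : ℕ} (h₀ : y a = false)
    (h₁ : y (a + m) = false) : segment y a (m + 1) ∈ FF := by
  refine ⟨by simp [← List.length_pos_iff], ?_, ?_⟩
  · simp [segment, List.head?_map, List.head?_range, h₀]
  · simp [segment, List.getLast?_map, List.getLast?_range, h₁]

/-- `0 1^{s₁} 0 1^{s₂} ⋯ 0 1^{s_k} 0`. -/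
def zeroBuilding (ss : List ℕ) : Building := ⟨ss.map fun s => ([false], s), [false]⟩

lemma exists_zeroBuilding_word (t : Word) (ht : t.getLast? = some false) (m : ℕ) :
    ∃ ss : List ℕ, ss ≠ [] ∧ (zeroBuilding ss).word = false :: (spacer m ++ t) := by
  induction t generalizing m with
  | nil => simp at ht
  | cons c t ih =>
    cases c with
    | true =>
      have htne : t ≠ [] := by rintro rfl; simp at ht
      obtain ⟨ss, hss, hw⟩ := ih (List.getLast?_cons_of_ne_nil htne ▸ ht) (m + 1)
      refine ⟨ss, hss, ?_⟩
      rw [hw, spacer, spacer, List.replicate_succ']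
      simp
    | false =>
      rcases eq_or_ne t [] with rfl | hne
      · exact ⟨[m], by simp, rfl⟩
      · obtain ⟨ss, -, hw⟩ := ih (List.getLast?_cons_of_ne_nil hne ▸ ht) 0
        refine ⟨m :: ss, by simp, ?_⟩
        show [false] ++ spacer m ++ (zeroBuilding ss).word = _
        rw [hw]
        simp [spacer]

lemma Building.FromSet.mono {b : Building} {S T : Set Word} (hb : b.FromSet S) (hST : S ⊆ T) :
    b.FromSet T :=
  ⟨hb.1, fun v hv => hST (hb.2 v hv)⟩

lemma exists_building_of_mem_FF {w : Word} (hw : w ∈ FF) (hne : w ≠ [false]) :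
    ∃ b : Building, b.FromSet {[false]} ∧ b.word = w ∧ b.firstPiece = [false] := by
  obtain ⟨hw₀, hhead, hlast⟩ := hw
  obtain ⟨t, rfl⟩ : ∃ t, w = false :: t := by
    cases w with
    | nil => exact absurd rfl hw₀
    | cons c t => simp at hhead; exact ⟨t, by rw [hhead]⟩
  have htne : t ≠ [] := by rintro rfl; exact hne rfl
  obtain ⟨ss, hss, hword⟩ :=
    exists_zeroBuilding_word t (List.getLast?_cons_of_ne_nil htne ▸ hlast) 0
  refine ⟨zeroBuilding ss, ⟨by simpa [zeroBuilding] using hss, ?_⟩,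
    by simpa [spacer] using hword, ?_⟩
  · intro v hv
    simp only [Building.pieces, zeroBuilding, List.map_map, List.mem_append, List.mem_map,
      comp_apply, List.mem_singleton] at hv
    exact hv.elim (fun ⟨_, _, hv⟩ => hv.symm) id
  · cases ss with
    | nil => exact absurd rfl hss
    | cons _ _ => rfl

lemma isOpen_setOf_occursAtBi (u : Word) (q : ℤ) :
    IsOpen {y : ℤ → Bool | OccursAtBi u y q} := by
  have : {y : ℤ → Bool | OccursAtBi u y q} =
      ⋂ k ∈ Finset.range u.length, (fun y : ℤ → Bool => y (q + k)) ⁻¹' {u.getD k false} := by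
    ext y
    simp [OccursAtBi, eq_comm]
  rw [this]
  exact isOpen_biInter_finset fun k _ => (isOpen_discrete _).preimage (continuous_apply _)

lemma MinimalSubshift.exists_occursAtBi {X : Set (ℤ → Bool)} (hmin : MinimalSubshift X)
    {x z : ℤ → Bool} (hx : x ∈ X) (hz : z ∈ X) {u : Word} {q : ℤ} (hocc : OccursAtBi u z q) :
    ∃ p, OccursAtBi u x p := by
  obtain ⟨_, hocc', m, rfl⟩ :=
    mem_closure_iff.1 (hmin.2 x hx hz) _ (isOpen_setOf_occursAtBi u q) hocc
  refine ⟨q + m, fun k hk => ?_⟩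
  rw [hocc' k hk]
  ring_nf

lemma mem_of_forall_exists_agree {X : Set (ℤ → Bool)} (hX : IsClosed X)
    {z : ℤ → Bool} (h : ∀ N : ℕ, ∃ y ∈ X, ∀ k : ℤ, |k| ≤ N → y k = z k) : z ∈ X := by
  choose y hyX hy using h
  have hlim : Filter.Tendsto y Filter.atTop (nhds z) := tendsto_pi_nhds.2 fun k => by
    refine tendsto_const_nhds.congr' ?_
    filter_upwards [Filter.eventually_ge_atTop k.natAbs] with N hN
    exact (hy N k (by rw [Int.abs_eq_natAbs]; exact_mod_cast hN)).symm
  exact hX.mem_of_tendsto hlim (Filter.Eventually.of_forall hyX)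

lemma KRPartOn.exists_window_subset_base {X : Set (ℤ → Bool)} (P : KRPartOn X)
    {x : ℤ → Bool} (hx : x ∈ X) (hxb : x ∈ P.base) :
    ∃ W : ℕ, ∀ y ∈ X, (∀ k : ℤ, |k| ≤ W → y k = x k) → y ∈ P.base := by
  have hopen : IsOpen {y : X | (y : ℤ → Bool) ∈ P.base} := by
    simp only [KRPartOn.base, Set.mem_iUnion, Set.ofPred_exists]
    exact isOpen_iUnion fun k => (P.clopen k).2
  obtain ⟨U, hU, hUeq⟩ := isOpen_induced_iff.1 hopen
  have hxU : x ∈ U := show (⟨x, hx⟩ : X) ∈ Subtype.val ⁻¹' U from hUeq ▸ hxb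
  obtain ⟨I, V, hIV, hsub⟩ := isOpen_pi_iff.1 hU x hxU
  refine ⟨I.sup Int.natAbs, fun y hy hagree => ?_⟩
  have hyU : y ∈ U := hsub fun k hk => by
    rw [hagree k (by rw [Int.abs_eq_natAbs]; exact_mod_cast Finset.le_sup (f := Int.natAbs) hk)]
    exact (hIV k hk).2
  have : (⟨y, hy⟩ : X) ∈ Subtype.val ⁻¹' U := hyU
  rwa [hUeq] at this

lemma agreeOn_singleton (N : ℕ) (y : ℤ → Bool) : AgreeOn N {y} := by
  rintro _ rfl _ rfl _ _
  rfl

lemma isPeriodicPt_shift_iff {p : ℕ} {x : ℤ → Bool} :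
    IsPeriodicPt shift p x ↔ Periodic x p := by
  rw [IsPeriodicPt, IsFixedPt, shift_iterate, funext_iff]
  rfl

lemma MinimalSubshift.eq_image_iterate_of_isPeriodicPt {X : Set (ℤ → Bool)}
    (hmin : MinimalSubshift X) {x : ℤ → Bool} (hx : x ∈ X) {p : ℕ} (hp : 0 < p)
    (hper : IsPeriodicPt shift p x) :
    X = (fun j => shift^[j] x) '' Set.Iio (minimalPeriod shift x) := by
  set p₀ := minimalPeriod shift x
  have hp₀ : 0 < p₀ := hper.minimalPeriod_pos hp
  have hperiodic : Periodic x p₀ := isPeriodicPt_shift_iff.1 (isPeriodicPt_minimalPeriod shift x)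
  set O := (fun j => shift^[j] x) '' Set.Iio p₀
  have horbit : sorbit x ⊆ O := by
    rintro _ ⟨m, rfl⟩
    have hm : 0 ≤ m % p₀ := Int.emod_nonneg m (by omega)
    refine ⟨(m % p₀).toNat, by simpa [← Int.ofNat_lt, hm] using Int.emod_lt_of_pos m (by omega), ?_⟩
    funext k
    simp only [shift_iterate, shiftBy_apply, Int.toNat_of_nonneg hm]
    rw [← hperiodic.int_mul (m / p₀), Int.cast_id]
    congr 1
    linarith [Int.emod_add_mul_ediv m p₀]
  have hOX : O ⊆ X := by
    rintro _ ⟨j, -, rfl⟩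
    simp only [shift_iterate]
    exact hmin.1.shiftBy_mem _ hx
  have hfin : O.Finite := (Set.finite_Iio p₀).image _
  exact (closure_minimal horbit hfin.isClosed |>.trans' (hmin.2 x hx)).antisymm hOX

lemma MinimalSubshift.topRankLE_one_of_isPeriodicPt {X : Set (ℤ → Bool)}
    (hmin : MinimalSubshift X) {x : ℤ → Bool} (hx : x ∈ X) {p : ℕ} (hp : 0 < p)
    (hper : IsPeriodicPt shift p x) : TopRankLE X 1 := by
  have hX := hmin.eq_image_iterate_of_isPeriodicPt hx hp hper
  have : Finite X := by
    rw [hX]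
    exact ((Set.finite_Iio _).image _).to_subtype
  have himage : ∀ j, shift^[j] '' ({x} : Set (ℤ → Bool)) = {shift^[j] x} :=
    fun _ => Set.image_singleton
  refine ⟨x, hx, fun N => ⟨⟨1, fun _ => {x}, fun _ => minimalPeriod shift x, one_pos,
    fun _ => hper.minimalPeriod_pos hp, fun _ => Set.singleton_subset_iff.2 hx,
    fun _ => isClopen_discrete _, ?_, ?_, ?_⟩, le_rfl, fun _ j _ => ?_, ?_, ?_⟩⟩
  · intro k k' j j' hj hj' hne
    rw [himage, himage, Set.disjoint_singleton]
    exact fun h => hne (Prod.ext (Subsingleton.elim _ _) (iterate_injOn_Iio_minimalPeriod hj hj' h))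
  · simp only [Set.iUnion_const, himage, Finset.mem_range]
    rw [hX]
    ext y
    simp [eq_comm]
  · simp [himage, iterate_minimalPeriod]
  · rw [himage]
    exact agreeOn_singleton N _
  · simpa [KRPartOn.base] using agreeOn_singleton N x
  · exact Set.mem_iUnion.2 ⟨0, rfl⟩

lemma MinimalSubshift.not_isPeriodicPt {X : Set (ℤ → Bool)} (hmin : MinimalSubshift X)
    {n : ℕ} (hn : 2 ≤ n) (hrank : ∀ m : ℕ, TopRankLE X m → n ≤ m) {x : ℤ → Bool} (hx : x ∈ X)
    {p : ℕ} (hp : 0 < p) : ¬IsPeriodicPt shift p x :=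
  fun hper => absurd (hrank 1 (hmin.topRankLE_one_of_isPeriodicPt hx hp hper)) (by omega)

section ReturnTimes

variable {X : Set (ℤ → Bool)} (x : ℤ → Bool) (P : KRPartOn X)

def returnTimes : Set ℤ := {t | shiftBy t x ∈ P.base}

open scoped Classical in
noncomputable def towerAt (t : ℤ) : Fin P.d :=
  if h : ∃ k, shiftBy t x ∈ P.B k then h.choose else ⟨0, P.d_pos⟩

noncomputable def returnGap (t : ℤ) : ℕ := P.h (towerAt x P t)

def KRPartOn.maxHeight : ℕ := Finset.univ.sup P.h

variable {x P}

lemma returnGap_le_maxHeight (t : ℤ) : returnGap x P t ≤ P.maxHeight :=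
  Finset.le_sup (f := P.h) (Finset.mem_univ _)

lemma shiftBy_mem_towerAt {t : ℤ} (ht : t ∈ returnTimes x P) :
    shiftBy t x ∈ P.B (towerAt x P t) := by
  have hex : ∃ k, shiftBy t x ∈ P.B k := Set.mem_iUnion.1 ht
  rw [towerAt, dif_pos hex]
  exact hex.choose_spec

lemma shiftBy_add_mem_image {t : ℤ} {k : Fin P.d} (h : shiftBy t x ∈ P.B k) (j : ℕ) :
    shiftBy (t + j) x ∈ shift^[j] '' P.B k :=
  ⟨shiftBy t x, h, by funext m; simp [shift_iterate, add_assoc, add_comm (j : ℤ)]⟩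

lemma add_returnGap_mem {t : ℤ} (ht : t ∈ returnTimes x P) :
    t + returnGap x P t ∈ returnTimes x P := by
  show _ ∈ P.base
  rw [KRPartOn.base, ← P.base_eq]
  exact Set.mem_iUnion.2 ⟨_, shiftBy_add_mem_image (shiftBy_mem_towerAt ht) _⟩

lemma add_notMem_returnTimes {t : ℤ} (ht : t ∈ returnTimes x P) {j : ℕ} (hj₀ : 0 < j)
    (hj : j < returnGap x P t) : t + j ∉ returnTimes x P := by
  intro hmem
  obtain ⟨k, hk⟩ := Set.mem_iUnion.1 hmem
  refine Set.disjoint_left.1 (P.disj (towerAt x P t) k j 0 hj (P.h_pos k) (by simp; omega))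
    (shiftBy_add_mem_image (shiftBy_mem_towerAt ht) j) ?_
  simpa using hk

lemma add_returnGap_le {t t' : ℤ} (ht : t ∈ returnTimes x P) (ht' : t' ∈ returnTimes x P)
    (hlt : t < t') : t + returnGap x P t ≤ t' := by
  by_contra! hcon
  exact add_notMem_returnTimes ht (j := (t' - t).toNat) (by omega) (by omega)
    (by rwa [Int.toNat_of_nonneg (by omega), add_sub_cancel])

lemma exists_returnTimes_ge (h₀ : (0 : ℤ) ∈ returnTimes x P) (M : ℕ) :
    ∃ t ∈ returnTimes x P, (M : ℤ) ≤ t := by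
  induction M with
  | zero => exact ⟨0, h₀, le_rfl⟩
  | succ M ih =>
    obtain ⟨t, ht, hMt⟩ := ih
    have := P.h_pos (towerAt x P t)
    exact ⟨_, add_returnGap_mem ht, by push_cast [returnGap]; omega⟩

end ReturnTimes

structure FinePartition (X : Set (ℤ → Bool)) (x : ℤ → Bool) (n : ℕ) where
  N : ℕ
  P : KRPartOn X
  d_le : P.d ≤ n
  agreeOn_level : ∀ (k : Fin P.d) (j : ℕ), j < P.h k → AgreeOn N (shift^[j] '' P.B k)
  agreeOn_base : AgreeOn N P.base
  mem_base : x ∈ P.base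

namespace FinePartition

variable {X : Set (ℤ → Bool)} {x : ℤ → Bool} {n : ℕ} (L : FinePartition X x n)

lemma zero_mem_returnTimes : (0 : ℤ) ∈ returnTimes x L.P := by
  show shiftBy 0 x ∈ L.P.base
  convert L.mem_base
  funext k
  simp

lemma apply_add_of_mem {t : ℤ} (ht : t ∈ returnTimes x L.P) {k : ℤ} (hk : |k| ≤ L.N) :
    x (k + t) = x k :=
  L.agreeOn_base _ ht _ L.mem_base k hk

lemma segment_add_of_mem {t : ℤ} (ht : t ∈ returnTimes x L.P) {c : ℤ} {len : ℕ}
    (h : ∀ r : ℕ, r < len → |c + r| ≤ L.N) : segment x (t + c) len = segment x c len :=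
  segment_congr fun r hr => by rw [add_assoc, add_comm, L.apply_add_of_mem ht (h r hr)]

lemma apply_add_eq_of_towerAt_eq {t t' : ℤ} (ht : t ∈ returnTimes x L.P)
    (ht' : t' ∈ returnTimes x L.P) (htow : towerAt x L.P t = towerAt x L.P t') {j : ℤ}
    (hj₀ : -(L.N : ℤ) ≤ j) (hj₁ : j ≤ returnGap x L.P t + L.N) : x (t + j) = x (t' + j) := by
  rcases lt_or_ge j 0 with hneg | hnonneg
  · have hj : |j| ≤ L.N := abs_le.2 ⟨hj₀, by omega⟩
    rw [add_comm t, add_comm t', L.apply_add_of_mem ht hj, L.apply_add_of_mem ht' hj]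
  rcases lt_or_ge j (returnGap x L.P t) with hlt | hge
  · obtain ⟨j, rfl⟩ := Int.eq_ofNat_of_zero_le hnonneg
    have hj : j < L.P.h (towerAt x L.P t) := by exact_mod_cast hlt
    have hmem' := shiftBy_add_mem_image (shiftBy_mem_towerAt ht') j
    rw [← htow] at hmem'
    simpa using L.agreeOn_level _ j hj _ (shiftBy_add_mem_image (shiftBy_mem_towerAt ht) j)
      _ hmem' 0 (by simp)
  · have hgap : returnGap x L.P t' = returnGap x L.P t := by rw [returnGap, returnGap, htow]
    have hj : |j - returnGap x L.P t| ≤ L.N := abs_le.2 ⟨by omega, by omega⟩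
    have h := L.apply_add_of_mem (add_returnGap_mem ht) hj
    have h' := L.apply_add_of_mem (add_returnGap_mem ht') hj
    rw [hgap] at h'
    calc x (t + j) = x (j - returnGap x L.P t + (t + returnGap x L.P t)) := by ring_nf
      _ = x (t' + j) := by rw [h, ← h']; ring_nf

lemma lt_returnGap {G : ℕ}
    (hG : ∀ p : ℕ, 0 < p → p ≤ G → ∃ k : ℤ, |k| + p ≤ L.N ∧ x (k + p) ≠ x k)
    {t : ℤ} (ht : t ∈ returnTimes x L.P) : G < returnGap x L.P t := by
  by_contra! hle
  obtain ⟨k, hk, hne⟩ := hG (returnGap x L.P t) (L.P.h_pos _) hle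
  have hk₀ : |k| ≤ L.N := by linarith
  have hk₁ : |k + returnGap x L.P t| ≤ L.N := (abs_add_le _ _).trans (by simpa using hk)
  apply hne
  rw [← L.apply_add_of_mem ht hk₁, ← L.apply_add_of_mem (add_returnGap_mem ht) hk₀]
  ring_nf

end FinePartition

lemma exists_window_not_periodic {x : ℤ → Bool}
    (hap : ∀ p : ℕ, 0 < p → ¬IsPeriodicPt shift p x) (G : ℕ) :
    ∃ W : ℕ, ∀ p : ℕ, 0 < p → p ≤ G → ∃ k : ℤ, |k| + p ≤ W ∧ x (k + p) ≠ x k := by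
  have hwit : ∀ p : ℕ, ∃ k : ℤ, 0 < p → x (k + p) ≠ x k := fun p => by
    by_cases hp : 0 < p
    · have h := hap p hp
      rw [isPeriodicPt_shift_iff, Periodic] at h
      push Not at h
      exact h.imp fun _ hk _ => hk
    · exact ⟨0, fun h => absurd h hp⟩
  choose k hk using hwit
  refine ⟨(Finset.range (G + 1)).sup (fun p => (k p).natAbs) + G, fun p hp hpG =>
    ⟨k p, ?_, hk p hp⟩⟩
  have : (k p).natAbs ≤ (Finset.range (G + 1)).sup (fun p => (k p).natAbs) :=
    Finset.le_sup (f := fun p => (k p).natAbs) (Finset.mem_range.2 (by omega))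
  rw [Int.abs_eq_natAbs]
  omega

lemma exists_recurrence {X : Set (ℤ → Bool)} {x : ℤ → Bool} {n : ℕ}
    (hTR : ∀ N : ℕ, ∃ L : FinePartition X x n, N ≤ L.N) (N M : ℕ) :
    ∃ t : ℤ, M ≤ t ∧ ∀ k : ℤ, |k| ≤ N → x (k + t) = x k := by
  obtain ⟨L, hL⟩ := hTR N
  obtain ⟨t, ht, hMt⟩ := exists_returnTimes_ge L.zero_mem_returnTimes M
  exact ⟨t, hMt, fun k hk => L.apply_add_of_mem ht (hk.trans (by exact_mod_cast hL))⟩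

lemma FinePartition.exists_refinement {X : Set (ℤ → Bool)} {x : ℤ → Bool} {n : ℕ}
    (hX : IsSubshift X) (hx : x ∈ X) (hTR : ∀ N : ℕ, ∃ L : FinePartition X x n, N ≤ L.N)
    (hap : ∀ p : ℕ, 0 < p → ¬IsPeriodicPt shift p x) (L : FinePartition X x n) (G W : ℕ) :
    ∃ L' : FinePartition X x n, W ≤ L'.N ∧
      (∀ t ∈ returnTimes x L'.P, G < returnGap x L'.P t) ∧
      returnTimes x L'.P ⊆ returnTimes x L.P := by
  obtain ⟨W₁, hW₁⟩ := L.P.exists_window_subset_base hx L.mem_base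
  obtain ⟨W₂, hW₂⟩ := exists_window_not_periodic hap G
  obtain ⟨L', hL'⟩ := hTR (W + W₁ + W₂)
  refine ⟨L', by omega, fun t ht => L'.lt_returnGap (fun p hp hpG => ?_) ht, fun t ht => ?_⟩
  · obtain ⟨k, hk, hne⟩ := hW₂ p hp hpG
    exact ⟨k, hk.trans (by exact_mod_cast (by omega : W₂ ≤ L'.N)), hne⟩
  · exact hW₁ _ (hX.shiftBy_mem t hx) fun k hk =>
      L'.apply_add_of_mem ht (hk.trans (by exact_mod_cast (by omega : W₁ ≤ L'.N)))

lemma exists_two_zeros {X : Set (ℤ → Bool)} {x : ℤ → Bool} {n : ℕ}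
    (hTR : ∀ N : ℕ, ∃ L : FinePartition X x n, N ≤ L.N)
    (hap : ∀ p : ℕ, 0 < p → ¬IsPeriodicPt shift p x) :
    ∃ p q : ℤ, p < q ∧ x p = false ∧ x q = false := by
  obtain ⟨p, hp⟩ : ∃ p, x p = false := by
    by_contra! h
    exact hap 1 one_pos (isPeriodicPt_shift_iff.2 fun k => by simp [h])
  obtain ⟨t, ht, hrec⟩ := exists_recurrence hTR p.natAbs 1
  refine ⟨p, p + t, by omega, hp, ?_⟩
  rwa [hrec p (by rw [Int.abs_eq_natAbs])]

lemma exists_consecutive_zeros {x : ℤ → Bool} {p q : ℤ} (hpq : p < q) (hp : x p = false)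
    (hq : x q = false) :
    ∃ (a : ℤ) (s : ℕ), x (a - s - 1) = false ∧ x a = false ∧ segment x (a - s) s = spacer s := by
  have hex : ∃ r : ℕ, x (p + 1 + r) = false := ⟨(q - p - 1).toNat, by
    rwa [Int.toNat_of_nonneg (by omega), show p + 1 + (q - p - 1) = q by ring]⟩
  refine ⟨p + 1 + Nat.find hex, Nat.find hex, by rwa [add_sub_cancel_right, add_sub_cancel_right],
    Nat.find_spec hex, segment_eq_spacer fun r hr => ?_⟩
  rw [add_sub_cancel_right]
  simpa using Nat.find_min hex hr

structure KRChain (X : Set (ℤ → Bool)) (x : ℤ → Bool) (n : ℕ) where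
  L : ℕ → FinePartition X x n
  a : ℤ
  s : ℕ
  zero_left : x (a - s - 1) = false
  zero_right : x a = false
  segment_eq_spacer : segment x (a - s) s = spacer s
  window_le : ∀ i, |a| + s + 1 ≤ ((L i).N : ℤ)
  -- blocks of level `i` have length `returnGap - s > i + 1`
  lt_returnGap : ∀ i, ∀ t ∈ returnTimes x (L i).P, s + 1 + i < returnGap x (L i).P t
  returnTimes_subset : ∀ i, returnTimes x (L (i + 1)).P ⊆ returnTimes x (L i).P
  maxHeight_lt : ∀ i, ∀ t ∈ returnTimes x (L (i + 1)).P,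
    (L i).P.maxHeight < returnGap x (L (i + 1)).P t

lemma exists_krChain {X : Set (ℤ → Bool)} {x : ℤ → Bool} {n : ℕ} (hX : IsSubshift X)
    (hx : x ∈ X) (hTR : ∀ N : ℕ, ∃ L : FinePartition X x n, N ≤ L.N)
    (hap : ∀ p : ℕ, 0 < p → ¬IsPeriodicPt shift p x) : Nonempty (KRChain X x n) := by
  obtain ⟨p, q, hpq, hp, hq⟩ := exists_two_zeros hTR hap
  obtain ⟨a, s, h_left, h_right, h_ones⟩ := exists_consecutive_zeros hpq hp hq
  choose finer hN hgap hsub using FinePartition.exists_refinement hX hx hTR hap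
  obtain ⟨L₀, -⟩ := hTR 0
  let W := a.natAbs + s + 1
  let L : ℕ → FinePartition X x n := fun i =>
    Nat.rec (finer L₀ (s + 1) W) (fun i Li => finer Li (max (s + 2 + i) Li.P.maxHeight) W) i
  refine ⟨⟨L, a, s, h_left, h_right, h_ones, fun i => ?_, fun i => ?_,
    fun i => hsub _ _ _, fun i t ht => (le_max_right _ _).trans_lt (hgap _ _ _ t ht)⟩⟩
  · have : W ≤ (L i).N := by cases i <;> exact hN _ _ _
    rw [Int.abs_eq_natAbs]
    omega
  · cases i with
    | zero => exact hgap _ _ _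
    | succ i =>
      intro t ht
      have h : max (s + 2 + i) (L i).P.maxHeight < returnGap x (L (i + 1)).P t := hgap _ _ _ t ht
      have := le_max_left (s + 2 + i) (L i).P.maxHeight
      omega

namespace KRChain

variable {X : Set (ℤ → Bool)} {x : ℤ → Bool} {n : ℕ} (C : KRChain X x n)

lemma abs_le_window (i : ℕ) {c : ℤ} (h₀ : C.a - C.s - 1 ≤ c) (h₁ : c ≤ C.a) :
    |c| ≤ (C.L i).N := by
  have := C.window_le i
  exact abs_le.2 ⟨by linarith [neg_abs_le C.a], by linarith [le_abs_self C.a]⟩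

noncomputable def block (i : ℕ) (t : ℤ) : Word :=
  segment x (t + C.a) (returnGap x (C.L i).P t - C.s)

lemma block_mem_FF {i : ℕ} {t : ℤ} (ht : t ∈ returnTimes x (C.L i).P) : C.block i t ∈ FF := by
  have hgap := C.lt_returnGap i t ht
  obtain ⟨m, hm⟩ : ∃ m, returnGap x (C.L i).P t - C.s = m + 1 :=
    ⟨_, (Nat.succ_pred_eq_of_pos (by omega)).symm⟩
  rw [block, hm]
  apply segment_mem_FF
  · rw [add_comm, (C.L i).apply_add_of_mem ht (C.abs_le_window i (by omega) le_rfl)]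
    exact C.zero_right
  · rw [show t + C.a + m = C.a - C.s - 1 + (t + returnGap x (C.L i).P t) by omega,
      (C.L i).apply_add_of_mem (add_returnGap_mem ht) (C.abs_le_window i le_rfl (by omega))]
    exact C.zero_left

lemma block_eq_of_towerAt_eq {i : ℕ} {t t' : ℤ} (ht : t ∈ returnTimes x (C.L i).P)
    (ht' : t' ∈ returnTimes x (C.L i).P) (htow : towerAt x (C.L i).P t = towerAt x (C.L i).P t') :
    C.block i t = C.block i t' := by
  have hgap : returnGap x (C.L i).P t' = returnGap x (C.L i).P t := by
    rw [returnGap, returnGap, htow]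
  have ha := abs_le.1 (C.abs_le_window i (by omega) le_rfl)
  rw [block, block, hgap]
  refine segment_congr fun r hr => ?_
  rw [add_assoc, add_assoc]
  exact (C.L i).apply_add_eq_of_towerAt_eq ht ht' htow (by omega) (by omega)

open scoped Classical in
noncomputable def towerBlock (i k : ℕ) : Word :=
  if h : ∃ t ∈ returnTimes x (C.L i).P, (towerAt x (C.L i).P t : ℕ) = k then
    C.block i h.choose
  else C.block i 0

lemma exists_towerBlock_eq (i k : ℕ) :
    ∃ t ∈ returnTimes x (C.L i).P, C.towerBlock i k = C.block i t := by
  unfold towerBlock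
  split_ifs with h
  · exact ⟨_, h.choose_spec.1, rfl⟩
  · exact ⟨0, (C.L i).zero_mem_returnTimes, rfl⟩

lemma towerBlock_towerAt {i : ℕ} {t : ℤ} (ht : t ∈ returnTimes x (C.L i).P) :
    C.towerBlock i (towerAt x (C.L i).P t) = C.block i t := by
  have h : ∃ t' ∈ returnTimes x (C.L i).P,
      (towerAt x (C.L i).P t' : ℕ) = towerAt x (C.L i).P t := ⟨t, ht, rfl⟩
  rw [towerBlock, dif_pos h]
  exact C.block_eq_of_towerAt_eq h.choose_spec.1 ht (Fin.ext h.choose_spec.2)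

noncomputable def word : ℕ → ℕ → Word
  | 0, _ => [false]
  | i + 1, j => if j = 1 then C.block i 0 else C.towerBlock i (j - 2)

lemma exists_word_succ_eq_block (i j : ℕ) :
    ∃ t ∈ returnTimes x (C.L i).P, C.word (i + 1) j = C.block i t ∧ (j = 1 → t = 0) := by
  by_cases hj : j = 1
  · exact ⟨0, (C.L i).zero_mem_returnTimes, by simp [word, hj], fun _ => rfl⟩
  · obtain ⟨t, ht, heq⟩ := C.exists_towerBlock_eq i (j - 2)
    exact ⟨t, ht, by simp [word, hj, heq], fun h => absurd h hj⟩

lemma word_mem_FF (i j : ℕ) : C.word i j ∈ FF := by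
  cases i with
  | zero => exact ⟨by simp [word], rfl, rfl⟩
  | succ i =>
    obtain ⟨t, ht, heq, -⟩ := C.exists_word_succ_eq_block i j
    exact heq ▸ C.block_mem_FF ht

lemma block_mem_levelSet {i : ℕ} {t : ℤ} (ht : t ∈ returnTimes x (C.L i).P) :
    C.block i t ∈ levelSet (fun _ => n + 1) C.word (i + 1) := by
  have hk := (towerAt x (C.L i).P t).isLt
  have hd := (C.L i).d_le
  refine ⟨towerAt x (C.L i).P t + 2, by omega, by dsimp only; omega, ?_⟩
  simp [word, C.towerBlock_towerAt ht]

lemma block_append {i : ℕ} {t : ℤ} (ht : t ∈ returnTimes x (C.L i).P) {m : ℕ} (hm : C.s ≤ m) :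
    C.block i t ++ spacer C.s ++ segment x (t + returnGap x (C.L i).P t + C.a) (m - C.s) =
      segment x (t + C.a) (returnGap x (C.L i).P t + m - C.s) := by
  set g := returnGap x (C.L i).P t
  have hg := C.lt_returnGap i t ht
  have hspacer : spacer C.s = segment x (t + C.a + (g - C.s : ℕ)) C.s := by
    rw [← C.segment_eq_spacer, show t + C.a + (g - C.s : ℕ) = t + g + (C.a - C.s) by omega,
      (C.L i).segment_add_of_mem (add_returnGap_mem ht)
        fun r hr => C.abs_le_window i (by omega) (by omega)]
  rw [block, hspacer, segment_append,
    show t + g + C.a = t + C.a + ((g - C.s + C.s : ℕ) : ℤ) by omega, segment_append]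
  congr 1
  omega

lemma exists_building_segment (i : ℕ) {T : ℤ} (hT : T ∈ returnTimes x (C.L i).P) (m : ℕ) :
    ∀ t ∈ returnTimes x (C.L i).P, t < T → (T - t).toNat = m →
      ∃ b : Building, (∀ v ∈ b.pieces, ∃ r ∈ returnTimes x (C.L i).P, v = C.block i r) ∧
        b.word = segment x (t + C.a) (m - C.s) ∧ b.firstPiece = C.block i t ∧
        (t + returnGap x (C.L i).P t < T → b.pairs ≠ []) := by
  induction m using Nat.strong_induction_on with
  | _ m ih =>
  intro t ht htT hm
  have ht₁ := add_returnGap_mem ht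
  have hg : 0 < returnGap x (C.L i).P t := (C.L i).P.h_pos _
  rcases (add_returnGap_le ht hT htT).eq_or_lt with heq | hlt
  · refine ⟨⟨[], C.block i t⟩, by simpa [Building.pieces] using ⟨t, ht, rfl⟩, ?_, rfl,
      fun h => absurd heq h.ne⟩
    show C.block i t = _
    rw [block]
    congr 1
    omega
  · obtain ⟨b, hpieces, hword, -, -⟩ :=
      ih (T - (t + returnGap x (C.L i).P t)).toNat (by omega) _ ht₁ hlt rfl
    have hs := C.lt_returnGap i _ ht₁
    have hle := add_returnGap_le ht₁ hT hlt
    refine ⟨⟨(C.block i t, C.s) :: b.pairs, b.last⟩, ?_, ?_, rfl, fun _ => List.cons_ne_nil _ _⟩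
    · intro v hv
      simp only [Building.pieces, List.map_cons, List.cons_append, List.mem_cons] at hv
      exact hv.elim (fun hv => ⟨t, ht, hv⟩) (hpieces v)
    · show C.block i t ++ spacer C.s ++ b.word = _
      rw [hword, C.block_append ht (by omega)]
      congr 1
      omega

lemma exists_building_block (i : ℕ) {t : ℤ} (ht : t ∈ returnTimes x (C.L i).P) :
    ∃ b : Building, b.FromSet (levelSet (fun _ => n + 1) C.word i) ∧ b.word = C.block i t ∧
      (t = 0 → b.firstPiece = C.word i 1) := by
  cases i with
  | zero =>
    have hlen : 2 ≤ (C.block 0 t).length := by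
      have := C.lt_returnGap 0 t ht
      rw [block, segment_length]
      omega
    obtain ⟨b, hS, hw, hf⟩ := exists_building_of_mem_FF (C.block_mem_FF ht)
      fun h => by simp [h] at hlen
    refine ⟨b, hS.mono ?_, hw, fun _ => hf⟩
    rintro _ rfl
    exact ⟨1, le_rfl, Nat.le_add_left 1 n, rfl⟩
  | succ i =>
    have hT := add_returnGap_mem ht
    have hgap := C.maxHeight_lt i t ht
    have := returnGap_le_maxHeight (x := x) (P := (C.L i).P) t
    obtain ⟨b, hpieces, hword, hfirst, hpairs⟩ := C.exists_building_segment i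
      (C.returnTimes_subset i hT) _ t (C.returnTimes_subset i ht) (by omega) rfl
    refine ⟨b, ⟨hpairs (by omega), fun v hv => ?_⟩, by rw [hword, block]; congr 1; omega,
      fun h => by simp [hfirst, h, word]⟩
    obtain ⟨r, hr, rfl⟩ := hpieces v hv
    exact C.block_mem_levelSet hr

theorem hasRankConstr : HasRankConstr (fun k : ℕ => x (C.a + k)) (n + 1) := by
  have hbld : ∀ i j, ∃ b : Building, b.FromSet (levelSet (fun _ => n + 1) C.word i) ∧
      b.word = C.word (i + 1) j ∧ (j = 1 → b.firstPiece = C.word i 1) := fun i j => by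
    obtain ⟨t, ht, hw, h1⟩ := C.exists_word_succ_eq_block i j
    obtain ⟨b, hS, hbw, hbf⟩ := C.exists_building_block i ht
    exact ⟨b, hS, hbw.trans hw.symm, fun hj => hbf (h1 hj)⟩
  choose bld hS hw hf using hbld
  refine ⟨⟨fun _ => n + 1, C.word, bld, fun _ => by omega, fun _ => le_rfl,
    fun i j _ _ => C.word_mem_FF i j, fun _ _ _ => rfl, fun i j _ _ => hS i j,
    fun i j _ _ => hw i j, fun i => hf i 1 rfl⟩, fun i k hk => ?_, fun m => ⟨m + 1, ?_⟩⟩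
  · cases i with
    | zero =>
      obtain rfl : k = 0 := by simpa [word] using hk
      simpa [word] using C.zero_right.symm
    | succ i =>
      simp only [word, if_true] at hk ⊢
      rw [block, segment_getD _ _ (by simpa [block] using hk), zero_add]
  · have := C.lt_returnGap m 0 (C.L m).zero_mem_returnTimes
    simp only [word, if_true, block, segment_length]
    omega

end KRChain

lemma MinimalSubshift.eq_XV {X : Set (ℤ → Bool)} (hmin : MinimalSubshift X) {x : ℤ → Bool}
    (hx : x ∈ X) (hrec : ∀ N M : ℕ, ∃ t : ℤ, M ≤ t ∧ ∀ k : ℤ, |k| ≤ N → x (k + t) = x k)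
    (c : ℤ) : X = XV (fun k : ℕ => x (c + k)) := by
  apply Set.Subset.antisymm
  · rintro z hz u ⟨q, hq⟩
    obtain ⟨p, hp⟩ := hmin.exists_occursAtBi hx hz hq
    obtain ⟨t, ht, hrect⟩ := hrec (p.natAbs + u.length) (p.natAbs + c.natAbs)
    have hp' := abs_le.1 (show |p| ≤ p.natAbs by rw [Int.abs_eq_natAbs])
    have hc' := abs_le.1 (show |c| ≤ c.natAbs by rw [Int.abs_eq_natAbs])
    refine ⟨(p + t - c).toNat, fun k hk => ?_⟩
    rw [hp k hk, ← hrect _ (abs_le.2 ⟨by omega, by omega⟩)]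
    congr 1
    omega
  · intro z hz
    refine mem_of_forall_exists_agree hmin.1.2.1 fun N => ?_
    obtain ⟨q, hq⟩ := hz (segment z (-N) (2 * N + 1))
      ⟨-N, fun k hk => segment_getD _ _ (by simpa using hk)⟩
    refine ⟨shiftBy (c + q + N) x, hmin.1.shiftBy_mem _ hx, fun k hk => ?_⟩
    have hk' := abs_le.1 hk
    have := hq (k + N).toNat (by simp; omega)
    rw [segment_getD _ _ (by omega), show -(N : ℤ) + (k + N).toNat = k by omega] at this
    rw [this, shiftBy_apply]
    congr 1
    omega

/-- Corollary 7.4. A minimal subshift of topological rank `n ≥ 2` has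
finite symbolic rank. -/
theorem statement_18 (n : ℕ) (hn : 2 ≤ n) (X : Set (ℤ → Bool)) (hmin : MinimalSubshift X)
    (hrank : TopRankLE X n ∧ ∀ m : ℕ, TopRankLE X m → n ≤ m) :
    ∃ m : ℕ, 1 ≤ m ∧ ∃ V : ℕ → Bool, HasRankConstr V m ∧ X = XV V := by
  obtain ⟨⟨x, hx, hparts⟩, hrank_min⟩ := hrank
  have hTR : ∀ N : ℕ, ∃ L : FinePartition X x n, N ≤ L.N := fun N =>
    let ⟨P, hd, hlevel, hbase, hxb⟩ := hparts N
    ⟨⟨N, P, hd, hlevel, hbase, hxb⟩, le_rfl⟩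
  have hap : ∀ p : ℕ, 0 < p → ¬IsPeriodicPt shift p x :=
    fun _ hp => hmin.not_isPeriodicPt hn hrank_min hx hp
  obtain ⟨C⟩ := exists_krChain hmin.1 hx hTR hap
  exact ⟨n + 1, by omega, _, C.hasRankConstr, hmin.eq_XV hx (exists_recurrence hTR) C.a⟩

end SubshiftRank
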